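/- arXiv:2009.10602 — 3 statements merged into one kernel-verified Lean document; each statement's English description precedes it below -/
import Mathlib

section
/- Let G be a finite group, p a prime, F a field of characteristic p, and H a subgroup of G. If every simple FG-module has dimension strictly less than p, then every simple FH-module has dimension strictly less than p. -/
/-!
A simple `F[H]`-module is `F[H] ⧸ I` for a maximal left ideal `I`. Restricting coefficients to `H`
is a right `F[H]`-linear retraction of the inclusion `F[H] → F[G]`, so the left ideal of `F[G]`
generated by `I` still pulls back to `I`, and so does any maximal left ideal `M` above it. Hence
`F[H] ⧸ I` embeds `F`-linearly into the simple `F[G]`-module `F[G] ⧸ M`, of dimension below `p`.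
-/

namespace MonoidAlgebra

variable {k G : Type*} [Semiring k] [Group G] (H : Subgroup G)

noncomputable def restrictSubgroup : MonoidAlgebra k G →+ MonoidAlgebra k H :=
  comapDomainAddMonoidHom H.subtype H.subtype_injective

theorem restrictSubgroup_single_coe (h : H) (r : k) :
    restrictSubgroup H (single (h : G) r) = single h r :=
  comapDomain_single_map _ H.subtype_injective h r

theorem restrictSubgroup_single_of_notMem {g : G} (hg : g ∉ H) (r : k) :
    restrictSubgroup H (single g r) = 0 :=
  comapDomain_single_of_not_mem_range (by simpa using hg) H.subtype_injective

theorem restrictSubgroup_one : restrictSubgroup H (1 : MonoidAlgebra k G) = 1 :=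
  restrictSubgroup_single_coe H 1 1

theorem restrictSubgroup_mul_mapDomain (a : MonoidAlgebra k G) (b : MonoidAlgebra k H) :
    restrictSubgroup H (a * mapDomain H.subtype b) = restrictSubgroup H a * b := by
  induction b using MonoidAlgebra.induction_linear with
  | zero => simp
  | add b b' hb hb' => rw [mapDomain_add, mul_add, map_add, hb, hb', mul_add]
  | single h r =>
    induction a using MonoidAlgebra.induction_linear with
    | zero => simp
    | add a a' ha ha' => rw [add_mul, map_add, ha, ha', map_add, add_mul]
    | single g s =>
      rw [mapDomain_single, single_mul_single, Subgroup.coe_subtype]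
      by_cases hg : g ∈ H
      · lift g to H using hg
        rw [← Subgroup.coe_mul, restrictSubgroup_single_coe,
          restrictSubgroup_single_coe, single_mul_single]
      · have hgh : g * h ∉ H := fun hgh => hg (by simpa using H.mul_mem hgh (H.inv_mem h.2))
        rw [restrictSubgroup_single_of_notMem H hgh, restrictSubgroup_single_of_notMem H hg,
          zero_mul]

end MonoidAlgebra

namespace Ideal

variable {A B : Type*} [Ring A] [Ring B] {F : Type*} [FunLike F B A] [RingHomClass F B A]

theorem comap_map_of_retraction (f : F) (π : A →+ B) (hπ : ∀ a b, π (a * f b) = π a * b)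
    (hπ1 : π 1 = 1) (I : Ideal B) : (I.map f).comap f = I := by
  refine le_antisymm (fun b hb => ?_) le_comap_map
  let J : Ideal A :=
    { carrier := {x | ∀ a, π (a * x) ∈ I}
      add_mem' := fun hx hy a => by rw [mul_add, map_add]; exact I.add_mem (hx a) (hy a)
      zero_mem' := fun a => by rw [mul_zero, map_zero]; exact I.zero_mem
      smul_mem' := fun c x hx a => by rw [smul_eq_mul, ← mul_assoc]; exact hx (a * c) }
  have hJ : I.map f ≤ J := span_le.mpr <| by
    rintro _ ⟨b, hb, rfl⟩ a
    rw [hπ]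
    exact I.mul_mem_left _ hb
  have hb1 := hJ hb 1
  rwa [hπ, hπ1, one_mul] at hb1

theorem exists_isMaximal_comap_eq_of_retraction (f : F) (π : A →+ B)
    (hπ : ∀ a b, π (a * f b) = π a * b) (hπ1 : π 1 = 1) (I : Ideal B) [hI : I.IsMaximal] :
    ∃ M : Ideal A, M.IsMaximal ∧ M.comap f = I := by
  have hmap : I.map f ≠ ⊤ := fun h => hI.ne_top <| by
    rw [← comap_map_of_retraction f π hπ hπ1 I, h, comap_top]
  obtain ⟨M, hM, hIM⟩ := exists_le_maximal _ hmap
  refine ⟨M, hM, (hI.eq_of_le (comap_ne_top f hM.ne_top) ?_).symm⟩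
  exact (comap_map_of_retraction f π hπ hπ1 I).symm.le.trans (comap_mono hIM)

variable {R : Type*} [CommRing R] [Algebra R A] [Algebra R B]

noncomputable def quotientComapLinearMap (f : B →ₐ[R] A) (M : Ideal A) :
    (B ⧸ M.comap f) →ₗ[R] A ⧸ M :=
  ((M.comap f).restrictScalars R).liftQ ((M.mkQ.restrictScalars R) ∘ₗ f.toLinearMap)
      (fun b hb => by simpa [Submodule.Quotient.mk_eq_zero] using hb) ∘ₗ
    (Submodule.Quotient.restrictScalarsEquiv R (M.comap f)).symm.toLinearMap

theorem quotientComapLinearMap_injective (f : B →ₐ[R] A) (M : Ideal A) :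
    Function.Injective (quotientComapLinearMap f M) := by
  rw [quotientComapLinearMap, LinearMap.coe_comp]
  refine (LinearMap.ker_eq_bot.mp ?_).comp (LinearEquiv.injective _)
  refine Submodule.ker_liftQ_eq_bot _ _ _ fun b hb => ?_
  simpa [Submodule.Quotient.mk_eq_zero] using hb

end Ideal

open MonoidAlgebra

theorem simple_modules_small_of_subgroup_general
    (p : ℕ)
    (F : Type) [Field F]
    (G : Type) [Group G] (H : Subgroup G)
    (hdim : ∀ (V : Type) [AddCommGroup V] [Module (MonoidAlgebra F G) V]
      [Module F V] [IsScalarTower F (MonoidAlgebra F G) V],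
      IsSimpleModule (MonoidAlgebra F G) V →
        FiniteDimensional F V ∧ Module.finrank F V < p) :
    ∀ (W : Type) [AddCommGroup W] [Module (MonoidAlgebra F H) W]
      [Module F W] [IsScalarTower F (MonoidAlgebra F H) W],
      IsSimpleModule (MonoidAlgebra F H) W →
        FiniteDimensional F W ∧ Module.finrank F W < p := by
  intro W _ _ _ _ hW
  obtain ⟨I, hI, ⟨eW⟩⟩ := isSimpleModule_iff_quot_maximal.mp hW
  let f := mapDomainAlgHom F F H.subtype
  obtain ⟨M, hM, rfl⟩ := Ideal.exists_isMaximal_comap_eq_of_retraction f (restrictSubgroup H)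
    (restrictSubgroup_mul_mapDomain H) (restrictSubgroup_one H) I
  obtain ⟨hfin, hlt⟩ := hdim (MonoidAlgebra F G ⧸ M) (isSimpleModule_iff_isCoatom.mpr hM.out)
  let ι : W →ₗ[F] MonoidAlgebra F G ⧸ M :=
    Ideal.quotientComapLinearMap f M ∘ₗ (eW.restrictScalars F).toLinearMap
  have hι : Function.Injective ι :=
    (Ideal.quotientComapLinearMap_injective f M).comp (eW.restrictScalars F).injective
  exact ⟨.of_injective ι hι, (LinearMap.finrank_le_finrank_of_injective hι).trans_lt hlt⟩

/-- Let `G` be a finite group, `p` a prime, `F` a field of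
characteristic `p`, and `H ≤ G`.  If every simple `FG`-module has dimension
strictly less than `p`, then every simple `FH`-module has dimension strictly
less than `p`. -/
theorem simple_modules_small_of_subgroup
    (p : ℕ) (hp : p.Prime)
    (F : Type) [Field F] [CharP F p]
    (G : Type) [Group G] [Finite G] (H : Subgroup G)
    (hdim : ∀ (V : Type) [AddCommGroup V] [Module (MonoidAlgebra F G) V]
      [Module F V] [IsScalarTower F (MonoidAlgebra F G) V],
      IsSimpleModule (MonoidAlgebra F G) V →
        FiniteDimensional F V ∧ Module.finrank F V < p) :
    ∀ (W : Type) [AddCommGroup W] [Module (MonoidAlgebra F H) W]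
      [Module F W] [IsScalarTower F (MonoidAlgebra F H) W],
      IsSimpleModule (MonoidAlgebra F H) W →
        FiniteDimensional F W ∧ Module.finrank F W < p :=
  simple_modules_small_of_subgroup_general p F G H hdim
end

section
/- Let G be a finite group, p a prime, and P a Sylow p-subgroup of G. Suppose that O_p(G) = 1 and that for every nontrivial subgroup V of P, the normalizer N_G(V) has a normal Sylow p-subgroup. Then N_G(V) ≤ N_G(P) for every nontrivial subgroup V of P. -/
/-- `pRadical p G` is `O_p(G)`, the largest normal `p`-subgroup of `G`. -/
def pRadical (p : ℕ) (G : Type*) [Group G] : Subgroup G :=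
  ⨆ (N : Subgroup G) (_ : N.Normal) (_ : IsPGroup p N), N

/-!
Downward induction on `V ≤ P`. For `V < P`, normalizers grow in the `p`-group `P`, so
`W = N_G(V) ⊓ P` is strictly larger than `V` and `N_G(W) ≤ N_G(P)` by induction. The normal
Sylow subgroup `Q` of `N_G(V)` contains `W`. If `W < Q`, then `N_Q(W) > W`; but `N_Q(W)` is a
`p`-subgroup of `N_G(P)`, hence lies in `P ⊓ N_G(V) = W`. So `Q = W`, and `N_G(V)`, which
normalizes `Q`, lies in `N_G(W) ≤ N_G(P)`.
-/

open Subgroup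

section

variable {p : ℕ} {G : Type*} [Group G]

theorem IsPGroup.le_sylow_of_le_normalizer {H : Subgroup G} (hH : IsPGroup p H) {P : Sylow p G}
    (hHP : H ≤ normalizer (P : Subgroup G)) : H ≤ P := by
  rw [← inf_eq_left, ← hH.inf_normalizer_sylow, inf_eq_left]
  exact hHP

theorem IsPGroup.le_map_subtype_of_normal {M : Subgroup G} {Q : Sylow p M}
    (hQ : (Q : Subgroup M).Normal) {S : Subgroup G} (hS : IsPGroup p S) (hSM : S ≤ M) :
    S ≤ (Q : Subgroup M).map M.subtype := by
  have hSQ : S.subgroupOf M ≤ Q :=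
    (hS.comap_of_injective M.subtype M.subtype_injective).le_sylow_of_le_normalizer
      (le_top.trans (normalizer_eq_top_iff.mpr hQ).ge)
  simpa [subgroupOf_map_subtype, inf_eq_left.mpr hSM] using map_mono (f := M.subtype) hSQ

theorem IsPGroup.lt_normalizer_inf [Fact p.Prime] {H K : Subgroup G} [Finite K]
    (hK : IsPGroup p K) (hHK : H < K) : H < normalizer (H : Set G) ⊓ K := by
  have : Group.IsNilpotent K := hK.isNilpotent
  have hH : H.subgroupOf K < ⊤ :=
    lt_top_iff_ne_top.mpr fun h => hHK.not_ge (subgroupOf_eq_top.mp h)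
  have := Group.normalizerCondition_of_isNilpotent _ hH
  rwa [← subgroupOf_normalizer_eq hHK.le, ← map_subtype_lt_map_subtype, subgroupOf_map_subtype,
    subgroupOf_map_subtype, inf_eq_left.mpr hHK.le] at this

theorem le_normalizer_sylow_of_normal_sylow [Fact p.Prime] [Finite G] {M : Subgroup G}
    {Q : Sylow p M} (hQ : (Q : Subgroup M).Normal) (P : Sylow p G)
    (hMP : normalizer ((M ⊓ P : Subgroup G) : Set G) ≤ normalizer ((P : Subgroup G) : Set G)) :
    M ≤ normalizer ((P : Subgroup G) : Set G) := by
  have hQ' : IsPGroup p ((Q : Subgroup M).map M.subtype) := Q.isPGroup'.map _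
  have hle : M ⊓ P ≤ (Q : Subgroup M).map M.subtype :=
    (P.isPGroup'.to_le inf_le_right).le_map_subtype_of_normal hQ inf_le_left
  have heq : (Q : Subgroup M).map M.subtype = M ⊓ P := by
    refine (hle.eq_or_lt.resolve_right fun hlt => (hQ'.lt_normalizer_inf hlt).not_ge ?_).symm
    have hP : normalizer ((M ⊓ P : Subgroup G) : Set G) ⊓ (Q : Subgroup M).map M.subtype ≤ P :=
      (hQ'.to_le inf_le_right).le_sylow_of_le_normalizer (inf_le_left.trans hMP)
    exact le_inf (inf_le_right.trans (map_subtype_le _)) hP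
  calc M = (normalizer (Q : Subgroup M)).map M.subtype := by
        rw [normalizer_eq_top_iff.mpr hQ, ← MonoidHom.range_eq_map, range_subtype]
    _ ≤ normalizer (((Q : Subgroup M).map M.subtype : Subgroup G) : Set G) := le_normalizer_map _
    _ = normalizer ((M ⊓ P : Subgroup G) : Set G) := by rw [heq]
    _ ≤ _ := hMP

end

theorem normalizer_le_normalizer_sylow_general
    (p : ℕ) (hp : p.Prime)
    (G : Type) [Group G] [Finite G] (P : Sylow p G)
    (hN : ∀ V : Subgroup G, V ≤ (P : Subgroup G) → V ≠ ⊥ →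
      ∃ Q : Sylow p (Subgroup.normalizer (V : Set G)), (Q : Subgroup (Subgroup.normalizer (V : Set G))).Normal) :
    ∀ V : Subgroup G, V ≤ (P : Subgroup G) → V ≠ ⊥ →
      Subgroup.normalizer (V : Set G) ≤ Subgroup.normalizer ((P : Subgroup G) : Set G) := by
  have : Fact p.Prime := ⟨hp⟩
  intro V
  induction V using WellFoundedGT.induction with
  | _ V ih =>
  intro hVP hV
  obtain hlt | rfl := hVP.lt_or_eq
  · obtain ⟨Q, hQ⟩ := hN V hVP hV
    have hVW : V < normalizer (V : Set G) ⊓ P := P.isPGroup'.lt_normalizer_inf hlt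
    exact le_normalizer_sylow_of_normal_sylow hQ P
      (ih _ hVW inf_le_right (ne_bot_of_gt hVW))
  · exact le_rfl

/-- Let `G` be a finite group, `p` a prime and `P` a Sylow
`p`-subgroup of `G`.  Suppose `O_p(G) = 1` and that for every nontrivial subgroup
`V ≤ P` the normalizer `N_G(V)` has a normal Sylow `p`-subgroup.  Then
`N_G(V) ≤ N_G(P)` for every nontrivial subgroup `V ≤ P`. -/
theorem normalizer_le_normalizer_sylow
    (p : ℕ) (hp : p.Prime)
    (G : Type) [Group G] [Finite G] (P : Sylow p G)
    (hO : pRadical p G = ⊥)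
    (hN : ∀ V : Subgroup G, V ≤ (P : Subgroup G) → V ≠ ⊥ →
      ∃ Q : Sylow p (Subgroup.normalizer (V : Set G)), (Q : Subgroup (Subgroup.normalizer (V : Set G))).Normal) :
    ∀ V : Subgroup G, V ≤ (P : Subgroup G) → V ≠ ⊥ →
      Subgroup.normalizer (V : Set G) ≤ Subgroup.normalizer ((P : Subgroup G) : Set G) :=
  normalizer_le_normalizer_sylow_general p hp G P hN
end

section
/- Let G be a finite group, p a prime, and P a Sylow p-subgroup of G. Suppose that O_p(G) = 1 and that for every nontrivial subgroup V of P, the normalizer N_G(V) has a normal Sylow p-subgroup. Then P ∩ P^g = 1 for every g ∈ G with g ∉ N_G(P); that is, distinct conjugates of P intersect trivially. -/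
/-!
If `V ≠ 1` lies in `P ∩ S` for Sylow subgroups `P`, `S`, then `S = P`; we argue by downward
induction on `V`. For `V < P`, the normalizer condition in the nilpotent group `P` gives
`V < N_P(V)`, and `N_P(V)` lies in the normal Sylow `p`-subgroup `Q` of `N_G(V)`, so the Sylow
subgroup containing `Q` is `P` by induction. Likewise `V < N_S(V) ≤ Q ≤ P`, and induction applied
to `N_S(V)` gives `S = P`. For `S = P^g` this says `g ∈ N_G(P)` whenever `P ∩ P^g ≠ 1`.
-/

open Subgroup

namespace Subgroup

variable {G : Type*} [Group G]

theorem lt_inf_normalizer_of_isNilpotent {H V : Subgroup G} [Group.IsNilpotent H] (hVH : V < H) :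
    V < H ⊓ normalizer (V : Set G) := by
  have hV : V.subgroupOf H < normalizer (V.subgroupOf H : Set H) :=
    Group.normalizerCondition_of_isNilpotent _
      (lt_top_iff_ne_top.mpr (mt subgroupOf_eq_top.mp hVH.not_ge))
  rwa [← subgroupOf_normalizer_eq hVH.le, ← map_lt_map_iff_of_injective H.subtype_injective,
    subgroupOf_map_subtype, subgroupOf_map_subtype, inf_eq_left.mpr hVH.le, inf_comm] at hV

end Subgroup

namespace Sylow

variable {p : ℕ} {G : Type*} [Group G]

theorem le_map_subtype_of_normal {H : Subgroup G} (Q : Sylow p H) [(Q : Subgroup H).Normal]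
    {K : Subgroup G} (hK : IsPGroup p K) (hKH : K ≤ H) : K ≤ (Q : Subgroup H).map H.subtype := by
  have hK' : IsPGroup p (K.subgroupOf H) := hK.of_equiv (subgroupOfEquivOfLe hKH).symm
  have hKQ : K.subgroupOf H ≤ Q :=
    le_sup_left.trans (Q.is_maximal' (hK'.to_sup_of_normal_right Q.isPGroup') le_sup_right).le
  simpa only [subgroupOf_map_subtype, inf_eq_left.mpr hKH] using map_mono (f := H.subtype) hKQ

theorem eq_of_le {P S : Sylow p G} (h : (S : Subgroup G) ≤ P) : S = P :=
  Sylow.ext (S.is_maximal' P.isPGroup' h).symm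

variable [Fact p.Prime] [Finite G]

theorem eq_of_common_subgroup_ne_bot (P : Sylow p G)
    (hN : ∀ V : Subgroup G, V ≤ P → V ≠ ⊥ →
      ∃ Q : Sylow p (normalizer (V : Set G)), (Q : Subgroup (normalizer (V : Set G))).Normal)
    {V : Subgroup G} (hVP : V ≤ P) (hV : V ≠ ⊥) {S : Sylow p G} (hVS : V ≤ S) : S = P := by
  induction V using WellFoundedGT.induction generalizing S with
  | ind V ih =>
  rcases hVP.eq_or_lt with rfl | hVP
  · exact (eq_of_le hVS).symm
  rcases hVS.eq_or_lt with rfl | hVS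
  · exact eq_of_le hVP.le
  obtain ⟨Q, hQ⟩ := hN V hVP.le hV
  have hsub : ∀ R : Sylow p G, V < R →
      V < (R : Subgroup G) ⊓ normalizer (V : Set G) ∧
        (R : Subgroup G) ⊓ normalizer (V : Set G) ≤
          (Q : Subgroup _).map (normalizer (V : Set G)).subtype := by
    intro R hR
    have : Group.IsNilpotent R := R.isPGroup'.isNilpotent
    exact ⟨lt_inf_normalizer_of_isNilpotent hR,
      le_map_subtype_of_normal Q (R.isPGroup'.to_le inf_le_left) inf_le_right⟩
  obtain ⟨hVNP, hNPQ⟩ := hsub P hVP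
  obtain ⟨hVNS, hNSQ⟩ := hsub S hVS
  obtain ⟨T, hQT⟩ := (Q.isPGroup'.map (normalizer (V : Set G)).subtype).exists_le_sylow
  have hTP : T = P := ih _ hVNP inf_le_left (ne_bot_of_gt hVNP) (hNPQ.trans hQT)
  subst hTP
  exact ih _ hVNS (hNSQ.trans hQT) (ne_bot_of_gt hVNS) inf_le_left

end Sylow

theorem sylow_TI_of_normalizers_general
    (p : ℕ) (hp : p.Prime)
    (G : Type) [Group G] [Finite G] (P : Sylow p G)
    (hN : ∀ V : Subgroup G, V ≤ (P : Subgroup G) → V ≠ ⊥ →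
      ∃ Q : Sylow p (Subgroup.normalizer (V : Set G)), (Q : Subgroup (Subgroup.normalizer (V : Set G))).Normal) :
    ∀ g : G, g ∉ Subgroup.normalizer ((P : Subgroup G) : Set G) →
      (P : Subgroup G) ⊓ (Subgroup.map ((MulAut.conj g⁻¹).toMonoidHom) (P : Subgroup G)) = ⊥ := by
  have := Fact.mk hp
  intro g hg
  by_contra hPg
  have hgP : g⁻¹ • P = P :=
    Sylow.eq_of_common_subgroup_ne_bot P hN inf_le_left hPg inf_le_right
  exact hg (inv_mem_iff.mp (Sylow.smul_eq_iff_mem_normalizer.mp hgP))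

/-- Let `G` be a finite group, `p` a prime and `P` a Sylow
`p`-subgroup of `G`.  Suppose `O_p(G) = 1` and that for every nontrivial subgroup
`V ≤ P` the normalizer `N_G(V)` has a normal Sylow `p`-subgroup.  Then
`P ∩ P^g = 1` for every `g ∈ G` with `g ∉ N_G(P)`, where `P^g = g⁻¹Pg`. -/
theorem sylow_TI_of_normalizers
    (p : ℕ) (hp : p.Prime)
    (G : Type) [Group G] [Finite G] (P : Sylow p G)
    (hO : pRadical p G = ⊥)
    (hN : ∀ V : Subgroup G, V ≤ (P : Subgroup G) → V ≠ ⊥ →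
      ∃ Q : Sylow p (Subgroup.normalizer (V : Set G)), (Q : Subgroup (Subgroup.normalizer (V : Set G))).Normal) :
    ∀ g : G, g ∉ Subgroup.normalizer ((P : Subgroup G) : Set G) →
      (P : Subgroup G) ⊓ (Subgroup.map ((MulAut.conj g⁻¹).toMonoidHom) (P : Subgroup G)) = ⊥ :=
  sylow_TI_of_normalizers_general p hp G P hN
end
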